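/- In the Tetrahedron algebra ⊠, for mutually distinct h, i, j in {0,1,2,3}, there is a Lie algebra homomorphism from sl2 (presented with basis X,Y,Z and brackets [X,Y]=2X+2Y, [Y,Z]=2Y+2Z, [Z,X]=2Z+2X) to ⊠ sending X to X_{hi}, Y to X_{ij}, Z to X_{jh}. -/

import Mathlib

namespace TetPaper
variable {K : Type*} [Field K]

/-- Auxiliary bracket for `sl2` in the `X,Y,Z` coordinates, where
`[X,Y] = 2X+2Y`, `[Y,Z] = 2Y+2Z`, `[Z,X] = 2Z+2X`. -/
def sl2xb (u v : Fin 3 → K) : Fin 3 → K :=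
  ![2*(u 0 * v 1 - u 1 * v 0) + 2*(u 2 * v 0 - u 0 * v 2),
    2*(u 0 * v 1 - u 1 * v 0) + 2*(u 1 * v 2 - u 2 * v 1),
    2*(u 2 * v 0 - u 0 * v 2) + 2*(u 1 * v 2 - u 2 * v 1)]

lemma sl2xb_add_lie (x y z : Fin 3 → K) : sl2xb (x + y) z = sl2xb x z + sl2xb y z := by
  funext i; fin_cases i <;> simp [sl2xb] <;> ring

lemma sl2xb_lie_add (x y z : Fin 3 → K) : sl2xb x (y + z) = sl2xb x y + sl2xb x z := by
  funext i; fin_cases i <;> simp [sl2xb] <;> ring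

lemma sl2xb_lie_self (x : Fin 3 → K) : sl2xb x x = 0 := by
  funext i; fin_cases i <;> simp [sl2xb, -mul_eq_zero] <;> ring

lemma sl2xb_leibniz (x y z : Fin 3 → K) :
    sl2xb x (sl2xb y z) = sl2xb (sl2xb x y) z + sl2xb y (sl2xb x z) := by
  funext i; fin_cases i <;> simp [sl2xb] <;> ring

lemma sl2xb_smul (t : K) (x y : Fin 3 → K) : sl2xb x (t • y) = t • sl2xb x y := by
  funext i; fin_cases i <;> simp [sl2xb] <;> ring

end TetPaper

/-- The Lie algebra over `K` with basis `X, Y, Z` and brackets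
`[X,Y] = 2X+2Y`, `[Y,Z] = 2Y+2Z`, `[Z,X] = 2Z+2X`. -/
def Sl2X (K : Type*) := Fin 3 → K

noncomputable instance {K : Type*} [Field K] : AddCommGroup (Sl2X K) :=
  inferInstanceAs (AddCommGroup (Fin 3 → K))

noncomputable instance {K : Type*} [Field K] : Module K (Sl2X K) :=
  inferInstanceAs (Module K (Fin 3 → K))

noncomputable instance {K : Type*} [Field K] : LieRing (Sl2X K) where
  bracket u v := TetPaper.sl2xb u v
  add_lie x y z := TetPaper.sl2xb_add_lie x y z
  lie_add x y z := TetPaper.sl2xb_lie_add x y z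
  lie_self x := TetPaper.sl2xb_lie_self x
  leibniz_lie x y z := TetPaper.sl2xb_leibniz x y z

noncomputable instance {K : Type*} [Field K] : LieAlgebra K (Sl2X K) where
  lie_smul t x y := TetPaper.sl2xb_smul t x y

namespace Sl2X
variable (K : Type*) [Field K]
/-- The basis vector `X`. -/
noncomputable def Xv : Sl2X K := (![1,0,0] : Fin 3 → K)
/-- The basis vector `Y`. -/
noncomputable def Yv : Sl2X K := (![0,1,0] : Fin 3 → K)
/-- The basis vector `Z`. -/
noncomputable def Zv : Sl2X K := (![0,0,1] : Fin 3 → K)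
end Sl2X

/-- The index set of the generators `X_{ij}` of the Tetrahedron algebra. -/
def TetGen : Type := {p : Fin 4 × Fin 4 // p.1 ≠ p.2}

/-- The generator `X_{ij}` inside the free Lie algebra. -/
noncomputable def XF (K : Type*) [Field K] (i j : Fin 4) (h : i ≠ j) :
    FreeLieAlgebra K TetGen :=
  FreeLieAlgebra.of K ⟨(i, j), h⟩

/-- The defining relations of the Tetrahedron algebra, as elements of the free Lie
algebra: `X_{ij} + X_{ji}`, `[X_{hi}, X_{ij}] - 2X_{hi} - 2X_{ij}` for mutually
distinct `h,i,j`, and `[X_{hi},[X_{hi},[X_{hi},X_{jk}]]] - 4[X_{hi},X_{jk}]` for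
mutually distinct `h,i,j,k`. -/
noncomputable def TetRel (K : Type*) [Field K] : Set (FreeLieAlgebra K TetGen) :=
  {x | ∃ i j, ∃ h : i ≠ j, x = XF K i j h + XF K j i h.symm} ∪
  {x | ∃ h i j, ∃ h1 : h ≠ i, ∃ h2 : i ≠ j, h ≠ j ∧
      x = ⁅XF K h i h1, XF K i j h2⁆ - (2:K) • XF K h i h1 - (2:K) • XF K i j h2} ∪
  {x | ∃ h i j k, ∃ h1 : h ≠ i, ∃ h2 : j ≠ k, h ≠ j ∧ h ≠ k ∧ i ≠ j ∧ i ≠ k ∧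
      x = ⁅XF K h i h1, ⁅XF K h i h1, ⁅XF K h i h1, XF K j k h2⁆⁆⁆
            - (4:K) • ⁅XF K h i h1, XF K j k h2⁆}

/-- The Lie ideal generated by the Tetrahedron relations. -/
noncomputable def TetIdeal (K : Type*) [Field K] :
    LieIdeal K (FreeLieAlgebra K TetGen) :=
  LieSubmodule.lieSpan K _ (TetRel K)

/-- The Tetrahedron algebra `⊠`: the quotient of the free Lie algebra on the
generators `X_{ij}` by the ideal generated by the defining relations. -/
noncomputable abbrev Tet (K : Type*) [Field K] :=
  FreeLieAlgebra K TetGen ⧸ TetIdeal K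

/-- The generator `X_{ij}` of the Tetrahedron algebra. -/
noncomputable def XT (K : Type*) [Field K] (i j : Fin 4) (h : i ≠ j) : Tet K :=
  LieSubmodule.Quotient.mk (N := TetIdeal K) (XF K i j h)

namespace Sl2X

variable {K : Type*} [Field K] {L : Type*} [LieRing L] [LieAlgebra K L]

lemma lie_def (u v : Sl2X K) : ⁅u, v⁆ = TetPaper.sl2xb u v := rfl

noncomputable def lift (A B C : L) (hAB : ⁅A, B⁆ = (2:K) • A + (2:K) • B)
    (hBC : ⁅B, C⁆ = (2:K) • B + (2:K) • C) (hCA : ⁅C, A⁆ = (2:K) • C + (2:K) • A) :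
    Sl2X K →ₗ⁅K⁆ L where
  toFun u := u 0 • A + u 1 • B + u 2 • C
  map_add' u v := by
    change (u 0 + v 0) • A + (u 1 + v 1) • B + (u 2 + v 2) • C = _
    module
  map_smul' t u := by
    change (t * u 0) • A + (t * u 1) • B + (t * u 2) • C = _
    simp only [RingHom.id_apply]
    module
  map_lie' {u v} := by
    have hBA : ⁅B, A⁆ = -((2:K) • A + (2:K) • B) := by rw [← lie_skew, hAB]
    have hCB : ⁅C, B⁆ = -((2:K) • B + (2:K) • C) := by rw [← lie_skew, hBC]
    have hAC : ⁅A, C⁆ = -((2:K) • C + (2:K) • A) := by rw [← lie_skew, hCA]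
    simp only [lie_def, TetPaper.sl2xb, Matrix.cons_val_zero, Matrix.cons_val_one,
      Matrix.cons_val_two, Matrix.head_cons, Matrix.tail_cons, lie_add, add_lie, smul_lie,
      lie_smul, lie_self, smul_zero, hAB, hBC, hCA, hBA, hCB, hAC]
    module

variable {A B C : L} {hAB : ⁅A, B⁆ = (2:K) • A + (2:K) • B}
  {hBC : ⁅B, C⁆ = (2:K) • B + (2:K) • C} {hCA : ⁅C, A⁆ = (2:K) • C + (2:K) • A}

@[simp] lemma lift_Xv : lift A B C hAB hBC hCA (Xv K) = A := by
  simp [lift, Xv]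

@[simp] lemma lift_Yv : lift A B C hAB hBC hCA (Yv K) = B := by
  simp [lift, Yv]

@[simp] lemma lift_Zv : lift A B C hAB hBC hCA (Zv K) = C := by
  simp [lift, Zv]

end Sl2X

lemma mk_eq_zero_of_mem_TetRel {K : Type*} [Field K] {x : FreeLieAlgebra K TetGen}
    (hx : x ∈ TetRel K) : LieSubmodule.Quotient.mk (N := TetIdeal K) x = 0 :=
  LieSubmodule.Quotient.mk_eq_zero'.mpr (LieSubmodule.subset_lieSpan hx)

lemma lie_XT_XT (K : Type*) [Field K] {a b c : Fin 4} (hab : a ≠ b) (hbc : b ≠ c)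
    (hac : a ≠ c) :
    ⁅XT K a b hab, XT K b c hbc⁆ = (2:K) • XT K a b hab + (2:K) • XT K b c hbc := by
  have h := mk_eq_zero_of_mem_TetRel (K := K) (Or.inl (Or.inr ⟨a, b, c, hab, hbc, hac, rfl⟩))
  rwa [← LieSubmodule.Quotient.mk'_apply, map_sub, map_sub, map_smul, map_smul,
    LieSubmodule.Quotient.mk'_apply, LieSubmodule.Quotient.mk_bracket, sub_sub,
    sub_eq_zero] at h

theorem stmt16_general (K : Type*) [Field K]
    (h i j : Fin 4) (hhi : h ≠ i) (hij : i ≠ j) (hjh : j ≠ h) :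
    ∃ φ : Sl2X K →ₗ⁅K⁆ Tet K,
      φ (Sl2X.Xv K) = XT K h i hhi ∧
      φ (Sl2X.Yv K) = XT K i j hij ∧
      φ (Sl2X.Zv K) = XT K j h hjh :=
  ⟨Sl2X.lift _ _ _ (lie_XT_XT K hhi hij hjh.symm) (lie_XT_XT K hij hjh hhi.symm)
    (lie_XT_XT K hjh hhi hij.symm), Sl2X.lift_Xv, Sl2X.lift_Yv, Sl2X.lift_Zv⟩

/-- for mutually distinct `h, i, j`, there is a Lie algebra
homomorphism from `sl2` (in the `X,Y,Z` presentation) to the Tetrahedron algebra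
sending `X ↦ X_{hi}`, `Y ↦ X_{ij}`, `Z ↦ X_{jh}`. -/
theorem stmt16 (K : Type*) [Field K] [CharZero K]
    (h i j : Fin 4) (hhi : h ≠ i) (hij : i ≠ j) (hjh : j ≠ h) :
    ∃ φ : Sl2X K →ₗ⁅K⁆ Tet K,
      φ (Sl2X.Xv K) = XT K h i hhi ∧
      φ (Sl2X.Yv K) = XT K i j hij ∧
      φ (Sl2X.Zv K) = XT K j h hjh :=
  stmt16_general K h i j hhi hij hjh
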